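/- Let n ≥ 2 and let M be a Coxeter matrix on Fin n (so M i i = 1 and M i j = M j i) such that the simple graph Υ on Fin n with adjacency i ~ j iff i ≠ j and M i j ≠ 0 is a tree (connected with exactly n−1 edges), and such that M i j is odd for every edge {i,j} of Υ. Then there exist, for each k ∈ Fin (n−1), distinct vertices i_k, j_k ∈ Fin n and a word w_k in the free group on Fin n, such that the n−1 unordered pairs {i_k, j_k} are exactly the edges of Υ, and the group presented by generators Fin n and the n−1 relators x_{i_k} · w_k · x_{j_k}⁻¹ · w_k⁻¹ admits a surjective group homomorphism onto the Coxeter group of M sending each generator to the corresponding Coxeter generator. -/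

import Mathlib

/-!
If `M i j = 2m + 1`, the Coxeter relation `(s_i s_j)^(2m+1) = 1` together with `s_i² = s_j² = 1`
says exactly that `s_i` is conjugate to `s_j` by `w = (s_j s_i)^m`. So orienting each edge of `Υ`
and taking the LOT relator `x_i w x_j⁻¹ w⁻¹` with `w = (x_j x_i)^m`, the assignment `x_v ↦ s_v`
kills every relator; the induced map is onto since the simple reflections generate.
-/

theorem mul_pow_mul_eq_of_mul_pow_odd_eq_one {G : Type*} [Group G] {a b : G} (ha : a * a = 1)
    (hb : b * b = 1) {m : ℕ} (h : (a * b) ^ (2 * m + 1) = 1) :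
    a * (b * a) ^ m = (b * a) ^ m * b := by
  have hshift : a * (b * a) ^ m = (a * b) ^ m * a :=
    (show SemiconjBy a (b * a) (a * b) from (mul_assoc a b a).symm).pow_right m
  have hba : b * a = (a * b)⁻¹ := by
    rw [mul_inv_rev, inv_eq_of_mul_eq_one_right ha, inv_eq_of_mul_eq_one_right hb]
  calc a * (b * a) ^ m = (a * b) ^ (m + 1) * b := by
        rw [hshift, pow_succ, mul_assoc _ (a * b), mul_assoc a, hb, mul_one]
    _ = ((a * b) ^ m)⁻¹ * (a * b) ^ (2 * m + 1) * b := by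
        rw [show 2 * m + 1 = m + (m + 1) by ring, pow_add _ m (m + 1), inv_mul_cancel_left]
    _ = (b * a) ^ m * b := by rw [h, mul_one, hba, inv_pow]

theorem CoxeterSystem.simple_mul_pow_eq_pow_mul_simple {B W : Type*} [Group W]
    {M : CoxeterMatrix B} (cs : CoxeterSystem M W) {i j : B} {m : ℕ} (h : M i j = 2 * m + 1) :
    cs.simple i * (cs.simple j * cs.simple i) ^ m = (cs.simple j * cs.simple i) ^ m * cs.simple j :=
  mul_pow_mul_eq_of_mul_pow_odd_eq_one (cs.simple_mul_simple_self i) (cs.simple_mul_simple_self j)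
    (h ▸ cs.simple_mul_simple_pow i j)

theorem CoxeterSystem.surjective_of_simple_mem_range {B W H : Type*} [Group W] [Group H]
    {M : CoxeterMatrix B} (cs : CoxeterSystem M W) (f : H →* W)
    (hf : ∀ i, cs.simple i ∈ f.range) : Function.Surjective f := by
  rw [← MonoidHom.range_eq_top, eq_top_iff, ← cs.subgroup_closure_range_simple, Subgroup.closure_le]
  rintro _ ⟨i, rfl⟩
  exact hf i

theorem SimpleGraph.exists_enum_edgeSet {V : Type*} [Finite V] (G : SimpleGraph V) {N : ℕ}
    (h : G.edgeSet.ncard = N) :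
    ∃ i j : Fin N → V, (∀ k, G.Adj (i k) (j k)) ∧ Set.range (fun k => s(i k, j k)) = G.edgeSet := by
  let e : Fin N ≃ G.edgeSet := (Finite.equivFinOfCardEq (by rwa [Nat.card_coe_set_eq])).symm
  have hrep : ∀ k, ∃ a b, s(a, b) = (e k : Sym2 V) := fun k => (e k).1.ind fun a b => ⟨a, b, rfl⟩
  choose i j hij using hrep
  refine ⟨i, j, fun k => by rw [← mem_edgeSet, hij]; exact (e k).2, ?_⟩
  ext z
  simp only [hij, Set.mem_range]
  exact ⟨fun ⟨k, hk⟩ => hk ▸ (e k).2, fun hz => ⟨e.symm ⟨z, hz⟩, by simp⟩⟩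

theorem stmt_1 (n : ℕ) (M : CoxeterMatrix (Fin n))
    (Υ : SimpleGraph (Fin n))
    (hcard : Υ.edgeSet.ncard = n - 1)
    (hodd : ∀ i j, Υ.Adj i j → Odd (M i j)) :
    ∃ (i j : Fin (n - 1) → Fin n) (w : Fin (n - 1) → FreeGroup (Fin n)),
      (∀ k, i k ≠ j k) ∧
      (Set.range fun k => s(i k, j k)) = Υ.edgeSet ∧
      ∃ φ : PresentedGroup
          (Set.range fun k => FreeGroup.of (i k) * w k * (FreeGroup.of (j k))⁻¹ * (w k)⁻¹)
          →* M.Group,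
        Function.Surjective φ ∧ ∀ v : Fin n, φ (PresentedGroup.of v) = M.simple v := by
  obtain ⟨i, j, hadj, hedges⟩ := Υ.exists_enum_edgeSet hcard
  choose m hm using fun k => hodd _ _ (hadj k)
  let w k := (FreeGroup.of (j k) * FreeGroup.of (i k)) ^ m k
  have hrel : ∀ k, FreeGroup.lift M.simple
      (FreeGroup.of (i k) * w k * (FreeGroup.of (j k))⁻¹ * (w k)⁻¹) = 1 := fun k => by
    simp only [w, map_mul, map_inv, map_pow, FreeGroup.lift_apply_of]
    rw [mul_inv_eq_one, mul_inv_eq_iff_eq_mul]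
    exact M.toCoxeterSystem.simple_mul_pow_eq_pow_mul_simple (hm k)
  let φ := PresentedGroup.toGroup (Set.forall_mem_range.2 hrel)
  have hφ (v : Fin n) : φ (PresentedGroup.of v) = M.simple v := PresentedGroup.toGroup.of _
  exact ⟨i, j, w, fun k => (hadj k).ne, hedges, φ,
    M.toCoxeterSystem.surjective_of_simple_mem_range φ fun v => ⟨_, hφ v⟩, hφ⟩
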